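/- (Lemma 8, identity (5.9)) Let ρ₁ ∈ ℝ, ρ₂ = −(2/√5)ρ₁, ρ₃ = (2√3/√10)ρ₁, f = ρ₁e₁ + ρ₂e₂ + ρ₃e₃, and let P denote the orthogonal projection of ℝ⁴ onto the null space of L. If g ∈ ℝ⁴ is orthogonal to the null space of L and satisfies Lg = Ve₁ − P(Ve₁), then ⟨g, Vf⟩ = ρ₁/(2B). -/

import Mathlib

/-!
The collision operator has rank one: `L x = (B/3)⟨w, x⟩ w` with `w = (√2, -1, -1, √2)`, so
`ker L = w^⊥` and `g ⟂ ker L` forces `g = a w`. Pairing `L g = Ve₁ - P(Ve₁)` with `w` kills the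
projection and gives `(B/3) a ‖w‖⁴ = ⟨w, Ve₁⟩`, i.e. `a = 1 / (6B)`. Since `V` is symmetric,
`⟨g, Vf⟩ = a ⟨Vw, f⟩`, and `⟨Vw, f⟩ = 2ρ₁ - ρ₂/√5 + 3ρ₃/√30 = 3ρ₁`.
-/

open Finset

/-- The linearized collision operator of the one-dimensional Broadwell model with
collision frequency `B`, as a `4 × 4` matrix. -/
noncomputable def LBmat (B : ℝ) : Matrix (Fin 4) (Fin 4) ℝ :=
  (-(B / 3)) • !![-2, Real.sqrt 2, Real.sqrt 2, -2;
                  Real.sqrt 2, -1, -1, Real.sqrt 2;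
                  Real.sqrt 2, -1, -1, Real.sqrt 2;
                  -2, Real.sqrt 2, Real.sqrt 2, -2]

/-- `e₁ = (√2/2, 0, 0, −√2/2)`. -/
noncomputable def eB1 : EuclideanSpace ℝ (Fin 4) :=
  WithLp.toLp 2 ![Real.sqrt 2 / 2, 0, 0, -(Real.sqrt 2 / 2)]

/-- `e₂ = (1/√10, 2/√5, 0, 1/√10)`. -/
noncomputable def eB2 : EuclideanSpace ℝ (Fin 4) :=
  WithLp.toLp 2 ![1 / Real.sqrt 10, 2 / Real.sqrt 5, 0, 1 / Real.sqrt 10]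

/-- `e₃ = (1/√15, −1/√30, √5/√6, 1/√15)`. -/
noncomputable def eB3 : EuclideanSpace ℝ (Fin 4) :=
  WithLp.toLp 2 ![1 / Real.sqrt 15, -(1 / Real.sqrt 30), Real.sqrt 5 / Real.sqrt 6, 1 / Real.sqrt 15]

open scoped RealInnerProductSpace

/-- The Broadwell linearized collision operator as a linear map on `ℝ⁴` with the
Euclidean inner product. -/
noncomputable def LB (B : ℝ) : EuclideanSpace ℝ (Fin 4) →ₗ[ℝ] EuclideanSpace ℝ (Fin 4) :=
  Matrix.toEuclideanLin (LBmat B)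

/-- The diagonal velocity matrix `V = diag(1, 1/2, −1/2, −1)` applied to `f`. -/
noncomputable def VB (f : EuclideanSpace ℝ (Fin 4)) : EuclideanSpace ℝ (Fin 4) :=
  WithLp.toLp 2 ![f 0, f 1 / 2, -(f 2) / 2, -(f 3)]

section RankOne

variable {E : Type*} [NormedAddCommGroup E] [InnerProductSpace ℝ E]
  {T : E →ₗ[ℝ] E} {c : ℝ} {w : E}

open Submodule

theorem LinearMap.ker_eq_orthogonal_span_singleton_of_rankOne (hc : c ≠ 0)
    (hT : ∀ x, T x = (c * ⟪w, x⟫) • w) : LinearMap.ker T = (ℝ ∙ w)ᗮ := by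
  ext x
  rw [LinearMap.mem_ker, mem_orthogonal_singleton_iff_inner_right, hT, smul_eq_zero,
    mul_eq_zero, or_iff_right hc, or_iff_left_of_imp]
  rintro rfl
  exact inner_zero_left x

theorem LinearMap.eq_smul_of_rankOne_of_apply_eq_sub_orthogonalProjectionOnto
    [(LinearMap.ker T).HasOrthogonalProjection] (hc : c ≠ 0)
    (hT : ∀ x, T x = (c * ⟪w, x⟫) • w) {g v : E}
    (hg₁ : ∀ h ∈ LinearMap.ker T, ⟪g, h⟫ = 0)
    (hg₂ : T g = v - ((LinearMap.ker T).orthogonalProjectionOnto v : E)) :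
    g = (⟪w, v⟫ / (c * ‖w‖ ^ 4)) • w := by
  have hK := LinearMap.ker_eq_orthogonal_span_singleton_of_rankOne hc hT
  obtain ⟨a, rfl⟩ : ∃ a : ℝ, a • w = g := by
    rw [← mem_span_singleton, ← orthogonal_orthogonal (ℝ ∙ w), ← hK]
    exact (mem_orthogonal' _ _).2 hg₁
  have hproj : ⟪w, ((LinearMap.ker T).orthogonalProjectionOnto v : E)⟫ = 0 :=
    mem_orthogonal_singleton_iff_inner_right.1
      (hK ▸ ((LinearMap.ker T).orthogonalProjectionOnto v).2)
  have key : c * a * ‖w‖ ^ 4 = ⟪w, v⟫ := by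
    have := congrArg (⟪w, ·⟫) hg₂
    simp only [hT, inner_smul_right, inner_sub_right, hproj, sub_zero,
      real_inner_self_eq_norm_sq] at this
    linear_combination this
  rcases eq_or_ne w 0 with rfl | hw
  · simp
  · rw [← key]
    congr 1
    field_simp

end RankOne

theorem EuclideanSpace.real_inner_fin_four (x y : EuclideanSpace ℝ (Fin 4)) :
    ⟪x, y⟫ = x 0 * y 0 + x 1 * y 1 + x 2 * y 2 + x 3 * y 3 := by
  simp only [PiLp.inner_apply, RCLike.inner_apply, conj_trivial, Fin.sum_univ_four]
  ring

noncomputable def wB : EuclideanSpace ℝ (Fin 4) := !₂[Real.sqrt 2, -1, -1, Real.sqrt 2]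

theorem LB_apply (B : ℝ) (x : EuclideanSpace ℝ (Fin 4)) :
    LB B x = (B / 3 * ⟪wB, x⟫) • wB := by
  ext i
  fin_cases i <;>
    simp only [LB, LBmat, wB, Matrix.toLpLin_apply, PiLp.toLp_apply, PiLp.smul_apply, smul_eq_mul,
      EuclideanSpace.real_inner_fin_four, Matrix.mulVec, dotProduct, Fin.sum_univ_four,
      Matrix.smul_apply, Matrix.of_apply, Matrix.cons_val_zero, Matrix.cons_val_one,
      Matrix.cons_val, Fin.zero_eta, Fin.mk_one, Fin.reduceFinMk] <;>
    grind

theorem norm_wB_sq : ‖wB‖ ^ 2 = 6 := by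
  rw [← real_inner_self_eq_norm_sq, EuclideanSpace.real_inner_fin_four]
  simp only [wB, PiLp.toLp_apply, Matrix.cons_val_zero, Matrix.cons_val_one, Matrix.cons_val]
  norm_num

theorem real_inner_VB_comm (x y : EuclideanSpace ℝ (Fin 4)) : ⟪x, VB y⟫ = ⟪VB x, y⟫ := by
  simp only [EuclideanSpace.real_inner_fin_four, VB, Matrix.cons_val_zero, Matrix.cons_val_one,
    Matrix.cons_val]
  ring

theorem inner_VB_wB_eB1 : ⟪VB wB, eB1⟫ = 2 := by
  simp only [EuclideanSpace.real_inner_fin_four, VB, wB, eB1, PiLp.toLp_apply,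
    Matrix.cons_val_zero, Matrix.cons_val_one, Matrix.cons_val]
  ring_nf
  norm_num

theorem inner_VB_wB_eB2 : ⟪VB wB, eB2⟫ = -(1 / Real.sqrt 5) := by
  simp only [EuclideanSpace.real_inner_fin_four, VB, wB, eB2, PiLp.toLp_apply,
    Matrix.cons_val_zero, Matrix.cons_val_one, Matrix.cons_val]
  ring

theorem inner_VB_wB_eB3 : ⟪VB wB, eB3⟫ = 3 / Real.sqrt 30 := by
  simp only [EuclideanSpace.real_inner_fin_four, VB, wB, eB3, PiLp.toLp_apply,
    Matrix.cons_val_zero, Matrix.cons_val_one, Matrix.cons_val]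
  have h30 : Real.sqrt 30 = Real.sqrt 5 * Real.sqrt 6 := by
    rw [← Real.sqrt_mul (by norm_num)]; norm_num
  rw [h30]
  field_simp
  norm_num
  ring

theorem inner_wB_VB_eq {ρ₁ ρ₂ ρ₃ : ℝ}
    (h2 : ρ₂ = -(2 / Real.sqrt 5) * ρ₁) (h3 : ρ₃ = 2 * Real.sqrt 3 / Real.sqrt 10 * ρ₁) :
    ⟪wB, VB (ρ₁ • eB1 + ρ₂ • eB2 + ρ₃ • eB3)⟫ = 3 * ρ₁ := by
  have h300 : Real.sqrt 10 * Real.sqrt 30 = 10 * Real.sqrt 3 := by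
    rw [← Real.sqrt_mul (by norm_num), show (10 : ℝ) * 30 = 10 ^ 2 * 3 by norm_num,
      Real.sqrt_mul (by norm_num), Real.sqrt_sq (by norm_num)]
  simp only [real_inner_VB_comm, inner_add_right, real_inner_smul_right, inner_VB_wB_eB1,
    inner_VB_wB_eB2, inner_VB_wB_eB3, h2, h3]
  field_simp
  rw [Real.sq_sqrt (by norm_num)]
  linear_combination (-3 * ρ₁) * h300

/-- Lemma 8, identity (5.9): with `ρ₂ = −(2/√5)ρ₁`, `ρ₃ = (2√3/√10)ρ₁`,
`f = ρ₁e₁ + ρ₂e₂ + ρ₃e₃` and `P` the orthogonal projection onto the null space of `L`,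
if `g ⟂ ker L` and `Lg = Ve₁ − P(Ve₁)`, then `⟨g, Vf⟩ = ρ₁/(2B)`. -/
theorem broadwell_inner_Linv_Ve1 (B : ℝ) (hB : 0 < B) (ρ₁ ρ₂ ρ₃ : ℝ)
    (h2 : ρ₂ = -(2 / Real.sqrt 5) * ρ₁) (h3 : ρ₃ = 2 * Real.sqrt 3 / Real.sqrt 10 * ρ₁)
    (f : EuclideanSpace ℝ (Fin 4)) (hf : f = ρ₁ • eB1 + ρ₂ • eB2 + ρ₃ • eB3)
    (g : EuclideanSpace ℝ (Fin 4))
    (hg₁ : ∀ h ∈ LinearMap.ker (LB B), ⟪g, h⟫ = 0)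
    (hg₂ : LB B g = VB eB1 -
      (Submodule.orthogonalProjectionOnto (LinearMap.ker (LB B)) (VB eB1) : EuclideanSpace ℝ (Fin 4))) :
    ⟪g, VB f⟫ = ρ₁ / (2 * B) := by
  have hg : g = (⟪wB, VB eB1⟫ / (B / 3 * ‖wB‖ ^ 4)) • wB :=
    LinearMap.eq_smul_of_rankOne_of_apply_eq_sub_orthogonalProjectionOnto
      (by positivity) (LB_apply B) hg₁ hg₂
  have hw4 : ‖wB‖ ^ 4 = 36 := by
    rw [show ‖wB‖ ^ 4 = (‖wB‖ ^ 2) ^ 2 by ring, norm_wB_sq]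
    norm_num
  rw [hg, hf, real_inner_smul_left, inner_wB_VB_eq h2 h3, real_inner_VB_comm, inner_VB_wB_eB1,
    hw4]
  field_simp
  ring
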